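/- For every even integer d ≥ 64, the claimed bound of Lemma III.9 of Brandão–Plenio fails: set σ = I_d/d and t = 1/(2d), let P be any orthogonal projection on ℂ^d of rank d/2, and let τ = t·P + 3t·(I_d − P). Then τ is a density matrix with τ − t·I_d positive semidefinite, f_σ(τ) := tr[σ(log₂ τ)²] − (tr[σ log₂ τ])² = (log₂ 3)²/4, and f_σ(τ) > ‖σ‖_∞ · (log₂(1 + t^{−1} − d))² = (log₂(1+d))²/d. -/

import Mathlib

open scoped Kronecker ComplexOrder Classical

noncomputable section

/-- Square complex matrices indexed by `ι`. -/
abbrev MatC (ι : Type*) := Matrix ι ι ℂ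

/-- A density matrix: positive semidefinite with trace one. -/
def IsDensity {ι : Type*} [Fintype ι] (ρ : MatC ι) : Prop :=
  ρ.PosSemidef ∧ ρ.trace = 1

/-- Functional calculus for Hermitian matrices (junk value `0` otherwise). -/
def funCalc {ι : Type*} [Fintype ι] [DecidableEq ι] (X : MatC ι) (f : ℝ → ℝ) : MatC ι :=
  if hX : X.IsHermitian then
    (hX.eigenvectorUnitary : MatC ι) * Matrix.diagonal (fun i => (f (hX.eigenvalues i) : ℂ)) *
      star (hX.eigenvectorUnitary : MatC ι)
  else 0

/-- Real matrix power by functional calculus, with the convention `0 ^ t = 0`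
(powers taken on the support). -/
def matPow {ι : Type*} [Fintype ι] [DecidableEq ι] (X : MatC ι) (t : ℝ) : MatC ι :=
  funCalc X fun x => if x ≤ 0 then 0 else Real.rpow x t

/-- Base-2 matrix logarithm by functional calculus on the support. -/
def matLog2 {ι : Type*} [Fintype ι] [DecidableEq ι] (X : MatC ι) : MatC ι :=
  funCalc X fun x => if x ≤ 0 then 0 else Real.logb 2 x

/-- Trace of the positive part of a Hermitian matrix: the sum of its nonnegative
eigenvalues (junk value `0` for non-Hermitian input). -/
def trPos {ι : Type*} [Fintype ι] [DecidableEq ι] (X : MatC ι) : ℝ :=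
  if hX : X.IsHermitian then ∑ i, max (hX.eigenvalues i) 0 else 0

/-- Largest eigenvalue (operator norm for PSD matrices). -/
def maxEig {ι : Type*} [Fintype ι] [DecidableEq ι] (X : MatC ι) : ℝ :=
  if hX : X.IsHermitian then ⨆ i, hX.eigenvalues i else 0

/-- Support inclusion `supp ρ ⊆ supp σ`, expressed via kernels. -/
def SuppLe {ι : Type*} [Fintype ι] (ρ σ : MatC ι) : Prop :=
  ∀ v : ι → ℂ, σ.mulVec v = 0 → ρ.mulVec v = 0

/-- `−log₂` with the convention `−log₂ 0 = +∞`, valued in extended reals. -/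
def negLog2 (x : ℝ) : EReal := if x ≤ 0 then ⊤ else ((-Real.logb 2 x : ℝ) : EReal)

/-- `log₂` with the convention `log₂ 0 = −∞`, valued in extended reals. -/
def elog2 (x : ℝ) : EReal := if x ≤ 0 then ⊥ else ((Real.logb 2 x : ℝ) : EReal)

/-! ### Channels -/

/-- The Kronecker extension `id_R ⊗ N` of a linear map on matrices. -/
def idTensor (R : Type*) {A B : Type*} (N : MatC A →ₗ[ℂ] MatC B) :
    MatC (R × A) →ₗ[ℂ] MatC (R × B) where
  toFun X := Matrix.of fun p q => N (Matrix.of fun a a' => X (p.1, a) (q.1, a')) p.2 q.2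
  map_add' X Y := by
    ext p q
    show N (Matrix.of fun a a' => (X + Y) (p.1, a) (q.1, a')) p.2 q.2 = _
    have h : (Matrix.of fun a a' => (X + Y) (p.1, a) (q.1, a'))
        = (Matrix.of fun a a' => X (p.1, a) (q.1, a'))
          + (Matrix.of fun a a' => Y (p.1, a) (q.1, a')) := rfl
    rw [h, map_add]; rfl
  map_smul' c X := by
    ext p q
    show N (Matrix.of fun a a' => (c • X) (p.1, a) (q.1, a')) p.2 q.2 = _
    have h : (Matrix.of fun a a' => (c • X) (p.1, a) (q.1, a'))
        = c • (Matrix.of fun a a' => X (p.1, a) (q.1, a')) := rfl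
    rw [h, map_smul]; rfl

/-- The Kronecker extension `N ⊗ id_R`. -/
def tensorId (R : Type*) {A B : Type*} (N : MatC A →ₗ[ℂ] MatC B) :
    MatC (A × R) →ₗ[ℂ] MatC (B × R) where
  toFun X := Matrix.of fun p q => N (Matrix.of fun a a' => X (a, p.2) (a', q.2)) p.1 q.1
  map_add' X Y := by
    ext p q
    show N (Matrix.of fun a a' => (X + Y) (a, p.2) (a', q.2)) p.1 q.1 = _
    have h : (Matrix.of fun a a' => (X + Y) (a, p.2) (a', q.2))
        = (Matrix.of fun a a' => X (a, p.2) (a', q.2))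
          + (Matrix.of fun a a' => Y (a, p.2) (a', q.2)) := rfl
    rw [h, map_add]; rfl
  map_smul' c X := by
    ext p q
    show N (Matrix.of fun a a' => (c • X) (a, p.2) (a', q.2)) p.1 q.1 = _
    have h : (Matrix.of fun a a' => (c • X) (a, p.2) (a', q.2))
        = c • (Matrix.of fun a a' => X (a, p.2) (a', q.2)) := rfl
    rw [h, map_smul]; rfl

/-- Transport of a matrix map along equivalences of index types. -/
def reindexChan {A A' B B' : Type*} (eA : A ≃ A') (eB : B ≃ B')
    (N : MatC A →ₗ[ℂ] MatC B) : MatC A' →ₗ[ℂ] MatC B' :=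
  (Matrix.reindexLinearEquiv ℂ ℂ eB eB).toLinearMap ∘ₗ N ∘ₗ
    (Matrix.reindexLinearEquiv ℂ ℂ eA.symm eA.symm).toLinearMap

/-- The tensor product `N ⊗ M` of two matrix maps. -/
def tensorChan {A B C D : Type*} (N : MatC A →ₗ[ℂ] MatC B) (M : MatC C →ₗ[ℂ] MatC D) :
    MatC (A × C) →ₗ[ℂ] MatC (B × D) :=
  tensorId D N ∘ₗ idTensor A M

/-- The `n`-fold tensor power `N^{⊗n}` of a matrix map, acting on matrices
indexed by `Fin n → A`. -/
def powChan {A B : Type*} (N : MatC A →ₗ[ℂ] MatC B) :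
    (n : ℕ) → (MatC (Fin n → A) →ₗ[ℂ] MatC (Fin n → B))
  | 0 => reindexChan (Equiv.refl _) (Equiv.ofUnique (Fin 0 → A) (Fin 0 → B)) LinearMap.id
  | n + 1 =>
      reindexChan (Fin.consEquiv fun _ : Fin (n + 1) => A) (Fin.consEquiv fun _ : Fin (n + 1) => B)
        (tensorChan N (powChan N n))

/-- Complete positivity and trace preservation (a quantum channel). -/
def IsCPTP {A B : Type*} [Fintype A] [Fintype B] (N : MatC A →ₗ[ℂ] MatC B) : Prop :=
  (∀ (R : Type) (fR : Fintype R) (X : MatC (R × A)),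
      letI := fR
      X.PosSemidef → (idTensor R N X).PosSemidef) ∧
    ∀ X : MatC A, (N X).trace = X.trace

/-- The (unnormalized) maximally entangled projector `|Φ⟩⟨Φ|`. -/
def maxEnt (A : Type*) [DecidableEq A] : MatC (A × A) :=
  Matrix.of fun p q => (if p.1 = p.2 then (1 : ℂ) else 0) * (if q.1 = q.2 then 1 else 0)

/-- The Choi matrix `J_N = (id_A ⊗ N)(|Φ⟩⟨Φ|)`. -/
def choiMat {A B : Type*} [DecidableEq A] (N : MatC A →ₗ[ℂ] MatC B) : MatC (A × B) :=
  idTensor A N (maxEnt A)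

/-! ### State divergences -/

/-- The set of achievable Type II error values for tests with Type I error at most `ε`. -/
def betaSet {ι : Type*} [Fintype ι] [DecidableEq ι] (ε : ℝ) (ρ σ : MatC ι) : Set ℝ :=
  {x | ∃ T : MatC ι, T.PosSemidef ∧ (1 - T).PosSemidef ∧
    1 - ε ≤ ((T * ρ).trace).re ∧ x = ((T * σ).trace).re}

/-- The hypothesis testing relative entropy `D_H^ε(ρ‖σ)`, valued in extended reals. -/
def DHe {ι : Type*} [Fintype ι] [DecidableEq ι] (ε : ℝ) (ρ σ : MatC ι) : EReal :=
  negLog2 (sInf (betaSet ε ρ σ))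

/-- The Umegaki relative entropy `D(ρ‖σ)` (base 2), `+∞` if the support condition fails. -/
def relEnt {ι : Type*} [Fintype ι] [DecidableEq ι] (ρ σ : MatC ι) : EReal :=
  if SuppLe ρ σ then (((ρ * (matLog2 ρ - matLog2 σ)).trace).re : EReal) else ⊤

/-- The Petz Rényi divergence `D̄_α(ρ‖σ)` for `α ∈ (0,1)`, `+∞` when
`tr[ρ^α σ^{1−α}] = 0`. -/
def petzD (α : ℝ) {ι : Type*} [Fintype ι] [DecidableEq ι] (ρ σ : MatC ι) : EReal :=
  if 0 < (((matPow ρ α * matPow σ (1 - α)).trace).re) then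
    (((α - 1)⁻¹ * Real.logb 2 (((matPow ρ α * matPow σ (1 - α)).trace).re) : ℝ) : EReal)
  else ⊤

/-- The sandwiched Rényi divergence `D̃_α(ρ‖σ)` for `α > 1`. -/
def sandD (α : ℝ) {ι : Type*} [Fintype ι] [DecidableEq ι] (ρ σ : MatC ι) : EReal :=
  if SuppLe ρ σ then
    ((((α - 1)⁻¹ *
        Real.logb 2
          (((matPow (matPow σ ((1 - α) / (2 * α)) * ρ * matPow σ ((1 - α) / (2 * α))) α).trace).re)) : ℝ) : EReal)
  else ⊤

/-- The max-relative entropy `D_max(ρ‖σ)`. -/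
def Dmax {ι : Type*} [Fintype ι] (ρ σ : MatC ι) : EReal :=
  sInf {y : EReal | ∃ t : ℝ, ((t : ℂ) • σ - ρ).PosSemidef ∧ y = ((Real.logb 2 t : ℝ) : EReal)}

/-- Trace norm `‖X‖₁ = tr √(X†X)`. -/
def traceNorm {ι : Type*} [Fintype ι] [DecidableEq ι] (X : MatC ι) : ℝ :=
  ((matPow (X.conjTranspose * X) 2⁻¹).trace).re

/-- Generalized fidelity of subnormalized states. -/
def genFid {ι : Type*} [Fintype ι] [DecidableEq ι] (ρ σ : MatC ι) : ℝ :=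
  traceNorm (matPow ρ 2⁻¹ * matPow σ 2⁻¹) +
    Real.sqrt ((1 - (ρ.trace).re) * (1 - (σ.trace).re))

/-- Purified distance. -/
def purDist {ι : Type*} [Fintype ι] [DecidableEq ι] (ρ σ : MatC ι) : ℝ :=
  Real.sqrt (1 - (genFid ρ σ) ^ 2)

/-- The smooth max-relative entropy `D_max^ε(ρ‖σ)`. -/
def DmaxSmooth (ε : ℝ) {ι : Type*} [Fintype ι] [DecidableEq ι] (ρ σ : MatC ι) : EReal :=
  sInf {y : EReal | ∃ ρ' : MatC ι, ρ'.PosSemidef ∧ ((ρ'.trace).re ≤ 1) ∧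
    purDist ρ' ρ ≤ ε ∧ y = Dmax ρ' σ}

/-! ### Channel divergences -/

/-- A generalized state divergence: a function on pairs of matrices over every
finite system. -/
abbrev StateDiv :=
  ∀ (ι : Type) (_ : Fintype ι) (_ : DecidableEq ι), MatC ι → MatC ι → EReal

/-- The Umegaki relative entropy as a `StateDiv`. -/
def UmegakiD : StateDiv := fun ι fι dι ρ σ => @relEnt ι fι dι ρ σ

/-- The sandwiched Rényi divergence as a `StateDiv`. -/
def SandD (α : ℝ) : StateDiv := fun ι fι dι ρ σ => @sandD α ι fι dι ρ σ

/-- The Petz Rényi divergence as a `StateDiv`. -/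
def PetzD (α : ℝ) : StateDiv := fun ι fι dι ρ σ => @petzD α ι fι dι ρ σ

/-- The smooth max-relative entropy as a `StateDiv`. -/
def DmaxD (ε : ℝ) : StateDiv := fun ι fι dι ρ σ => @DmaxSmooth ε ι fι dι ρ σ

/-- The hypothesis-testing relative entropy as a `StateDiv`. -/
def DHD (ε : ℝ) : StateDiv := fun ι fι dι ρ σ => @DHe ι fι dι ε ρ σ

/-- The channel divergence induced by a state divergence: supremum over all
finite reference systems `R` and input states `ψ` on `R × A`. -/
def chanDiv (D : StateDiv) {A B : Type} [Fintype A] [Fintype B] [DecidableEq B]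
    (N M : MatC A →ₗ[ℂ] MatC B) : EReal :=
  sSup {x : EReal | ∃ (R : Type) (fR : Fintype R) (dR : DecidableEq R)
    (ψ : MatC (R × A)),
      letI := fR; letI := dR;
      IsDensity ψ ∧
        x = D (R × B) inferInstance inferInstance (idTensor R N ψ) (idTensor R M ψ)}

/-- The regularized channel divergence `sup_{n ≥ 1} (1/n) D(N^{⊗n}‖M^{⊗n})`. -/
def regChanDiv (D : StateDiv) {A B : Type} [Fintype A] [Fintype B] [DecidableEq B]
    (N M : MatC A →ₗ[ℂ] MatC B) : EReal :=
  sSup {x : EReal | ∃ n : ℕ, 1 ≤ n ∧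
    x = (((n : ℝ)⁻¹ : ℝ) : EReal) * chanDiv D (powChan N n) (powChan M n)}

/-- The amortized channel divergence. -/
def amortChanDiv (D : StateDiv) {A B : Type} [Fintype A] [Fintype B] [DecidableEq A]
    [DecidableEq B] (N M : MatC A →ₗ[ℂ] MatC B) : EReal :=
  sSup {x : EReal | ∃ (R : Type) (fR : Fintype R) (dR : DecidableEq R)
    (ψ φ : MatC (R × A)),
      letI := fR; letI := dR;
      IsDensity ψ ∧ IsDensity φ ∧
        x = D (R × B) inferInstance inferInstance (idTensor R N ψ) (idTensor R M φ)
            - D (R × A) inferInstance inferInstance ψ φ}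

/-! ### Discrimination strategies -/

/-- Tensor product of matrices over a (dependent) family of systems. -/
def piKron {n : ℕ} {κ : Fin n → Type} (X : ∀ i, MatC (κ i)) : MatC (∀ i, κ i) :=
  Matrix.of fun f g => ∏ i, X i (f i) (g i)

/-- A coherent (parallel) strategy for discriminating `n` uses of channels
`A → B`: a reference system `R`, an input state on `R × A^n` and a binary test. -/
structure CohStrategy (A B : Type) [Fintype A] [DecidableEq A] [Fintype B] [DecidableEq B]
    (n : ℕ) where
  R : Type
  [fR : Fintype R]
  [dR : DecidableEq R]
  ψ : MatC (R × (Fin n → A))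
  hψ : IsDensity ψ
  T : MatC (R × (Fin n → B))
  hT₁ : T.PosSemidef
  hT₂ : (1 - T).PosSemidef

attribute [instance] CohStrategy.fR CohStrategy.dR

/-- Type I error of a coherent strategy against the null hypothesis channel `N`. -/
def CohStrategy.typeI {A B : Type} [Fintype A] [DecidableEq A] [Fintype B] [DecidableEq B]
    {n : ℕ} (N : MatC A →ₗ[ℂ] MatC B) (S : CohStrategy A B n) : ℝ :=
  (((1 - S.T) * idTensor S.R (powChan N n) S.ψ).trace).re

/-- Type II error of a coherent strategy against the alternative channel `M`. -/
def CohStrategy.typeII {A B : Type} [Fintype A] [DecidableEq A] [Fintype B] [DecidableEq B]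
    {n : ℕ} (M : MatC A →ₗ[ℂ] MatC B) (S : CohStrategy A B n) : ℝ :=
  ((S.T * idTensor S.R (powChan M n) S.ψ).trace).re

/-- **Conjecture 1** (exponentially strong converse of channel hypothesis testing
under coherent strategies). -/
def Conjecture1 : Prop :=
  ∀ (A B : Type) (fA : Fintype A) (dA : DecidableEq A) (fB : Fintype B) (dB : DecidableEq B),
    letI := fA; letI := dA; letI := fB; letI := dB;
    ∀ (N M : MatC A →ₗ[ℂ] MatC B), IsCPTP N → IsCPTP M → (choiMat N).PosDef →
      ∀ S : (n : ℕ) → CohStrategy A B n,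
        regChanDiv UmegakiD N M <
          Filter.liminf
            (fun n : ℕ => -((((n : ℝ)⁻¹ : ℝ) : EReal) * elog2 ((S n).typeII M)))
            Filter.atTop →
        ∃ c : ℝ, 0 < c ∧ ∀ᶠ n : ℕ in Filter.atTop,
          1 - (S n).typeI N ≤ (2 : ℝ) ^ (-(c * n))

/-- A sequential (adaptive) strategy for discriminating `m + 1` uses of channels
`A → B`: reference systems `R 0, …, R m`, an initial state on `R 0 × A`, adaptive
update channels `P i : R i × B → R (i+1) × A`, and a final binary test. -/
structure SeqStrategy (A B : Type) [Fintype A] [DecidableEq A] [Fintype B] [DecidableEq B]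
    (m : ℕ) where
  R : Fin (m + 1) → Type
  [fR : ∀ i, Fintype (R i)]
  [dR : ∀ i, DecidableEq (R i)]
  ψ : MatC (R 0 × A)
  hψ : IsDensity ψ
  P : ∀ i : Fin m, MatC (R i.castSucc × B) →ₗ[ℂ] MatC (R i.succ × A)
  hP : ∀ i, IsCPTP (P i)
  T : MatC (R (Fin.last m) × B)
  hT₁ : T.PosSemidef
  hT₂ : (1 - T).PosSemidef

attribute [instance] SeqStrategy.fR SeqStrategy.dR

/-- The intermediate testing states of a sequential strategy when the unknown
channel is `N`: after `i + 1` uses of the channel, on system `R i × B`. -/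
def SeqStrategy.states {A B : Type} [Fintype A] [DecidableEq A] [Fintype B] [DecidableEq B]
    {m : ℕ} (S : SeqStrategy A B m) (N : MatC A →ₗ[ℂ] MatC B) :
    ∀ i : Fin (m + 1), MatC (S.R i × B) :=
  Fin.induction (idTensor (S.R 0) N S.ψ)
    (fun i prev => idTensor (S.R i.succ) N (S.P i prev))

/-- The final testing state of a sequential strategy for channel `N`. -/
def SeqStrategy.finalState {A B : Type} [Fintype A] [DecidableEq A] [Fintype B]
    [DecidableEq B] {m : ℕ} (S : SeqStrategy A B m) (N : MatC A →ₗ[ℂ] MatC B) :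
    MatC (S.R (Fin.last m) × B) :=
  S.states N (Fin.last m)

/-- Type I error of a sequential strategy against the null hypothesis channel `N`. -/
def SeqStrategy.typeI {A B : Type} [Fintype A] [DecidableEq A] [Fintype B] [DecidableEq B]
    {m : ℕ} (N : MatC A →ₗ[ℂ] MatC B) (S : SeqStrategy A B m) : ℝ :=
  (((1 - S.T) * S.finalState N).trace).re

/-- Type II error of a sequential strategy against the alternative channel `M`. -/
def SeqStrategy.typeII {A B : Type} [Fintype A] [DecidableEq A] [Fintype B] [DecidableEq B]
    {m : ℕ} (M : MatC A →ₗ[ℂ] MatC B) (S : SeqStrategy A B m) : ℝ :=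
  ((S.T * S.finalState M).trace).re

/-- A product strategy for discriminating `n` uses of channels `A → B`:
reference systems `R i`, product input states `φ i` on `R i × A`, and a binary
test on the joint output. -/
structure ProdStrategy (A B : Type) [Fintype A] [DecidableEq A] [Fintype B] [DecidableEq B]
    (n : ℕ) where
  R : Fin n → Type
  [fR : ∀ i, Fintype (R i)]
  [dR : ∀ i, DecidableEq (R i)]
  φ : ∀ i, MatC (R i × A)
  hφ : ∀ i, IsDensity (φ i)
  T : MatC (∀ i, R i × B)
  hT₁ : T.PosSemidef
  hT₂ : (1 - T).PosSemidef

attribute [instance] ProdStrategy.fR ProdStrategy.dR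

/-- The testing state of a product strategy for channel `N`. -/
def ProdStrategy.state {A B : Type} [Fintype A] [DecidableEq A] [Fintype B] [DecidableEq B]
    {n : ℕ} (S : ProdStrategy A B n) (N : MatC A →ₗ[ℂ] MatC B) : MatC (∀ i, S.R i × B) :=
  piKron fun i => idTensor (S.R i) N (S.φ i)

/-- Type I error of a product strategy against the null hypothesis channel `N`. -/
def ProdStrategy.typeI {A B : Type} [Fintype A] [DecidableEq A] [Fintype B] [DecidableEq B]
    {n : ℕ} (N : MatC A →ₗ[ℂ] MatC B) (S : ProdStrategy A B n) : ℝ :=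
  (((1 - S.T) * S.state N).trace).re

/-- Type II error of a product strategy against the alternative channel `M`. -/
def ProdStrategy.typeII {A B : Type} [Fintype A] [DecidableEq A] [Fintype B] [DecidableEq B]
    {n : ℕ} (M : MatC A →ₗ[ℂ] MatC B) (S : ProdStrategy A B n) : ℝ :=
  ((S.T * S.state M).trace).re

/-- Extra: the `n`-fold power of a channel acting on matrices indexed by
`Fin n → R × A` (reference `R` paired with each channel input). -/
noncomputable def pairPow (R : Type) {A B : Type} (N : MatC A →ₗ[ℂ] MatC B) (n : ℕ) :
    MatC (Fin n → R × A) →ₗ[ℂ] MatC (Fin n → R × B) :=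
  reindexChan (Equiv.arrowProdEquivProdArrow (Fin n) (fun _ => R) (fun _ => A)).symm
    (Equiv.arrowProdEquivProdArrow (Fin n) (fun _ => R) (fun _ => B)).symm
    (idTensor (Fin n → R) (powChan N n))

/-- The optimal hypothesis-testing relative entropy over product strategies. -/
noncomputable def DHpro (ε : ℝ) {A B : Type} [Fintype A] [DecidableEq A] [Fintype B]
    [DecidableEq B] (N M : MatC A →ₗ[ℂ] MatC B) (n : ℕ) : EReal :=
  sSup {x : EReal | ∃ (R : Fin n → Type) (fR : ∀ i, Fintype (R i))
    (dR : ∀ i, DecidableEq (R i)) (φ : ∀ i, MatC (R i × A)),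
      letI := fR; letI := dR;
      (∀ i, IsDensity (φ i)) ∧
        x = DHe ε (piKron fun i => idTensor (R i) N (φ i))
              (piKron fun i => idTensor (R i) M (φ i))}

/-- The optimal hypothesis-testing relative entropy over sequential strategies for
`m + 1` channel uses. -/
noncomputable def DHseq (ε : ℝ) {A B : Type} [Fintype A] [DecidableEq A] [Fintype B]
    [DecidableEq B] (N M : MatC A →ₗ[ℂ] MatC B) (m : ℕ) : EReal :=
  sSup {x : EReal | ∃ S : SeqStrategy A B m,
    x = DHe ε (S.finalState N) (S.finalState M)}

/-- The strong converse exponent of channel discrimination under product strategies. -/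
noncomputable def scExpPRO (r : ℝ) {A B : Type} [Fintype A] [DecidableEq A] [Fintype B]
    [DecidableEq B] (N M : MatC A →ₗ[ℂ] MatC B) : EReal :=
  sInf {e : EReal | ∃ S : (n : ℕ) → ProdStrategy A B n,
    (Filter.limsup (fun n : ℕ => (((n : ℝ)⁻¹ : ℝ) : EReal) * elog2 ((S n).typeII M))
        Filter.atTop ≤ ((-r : ℝ) : EReal)) ∧
    e = -Filter.liminf (fun n : ℕ => (((n : ℝ)⁻¹ : ℝ) : EReal) * elog2 (1 - (S n).typeI N))
        Filter.atTop}

/-- The error exponent of channel discrimination under product strategies. -/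
noncomputable def erExpPRO (r : ℝ) {A B : Type} [Fintype A] [DecidableEq A] [Fintype B]
    [DecidableEq B] (N M : MatC A →ₗ[ℂ] MatC B) : EReal :=
  sSup {e : EReal | ∃ S : (n : ℕ) → ProdStrategy A B n,
    (Filter.limsup (fun n : ℕ => (((n : ℝ)⁻¹ : ℝ) : EReal) * elog2 ((S n).typeII M))
        Filter.atTop ≤ ((-r : ℝ) : EReal)) ∧
    e = -Filter.limsup (fun n : ℕ => (((n : ℝ)⁻¹ : ℝ) : EReal) * elog2 ((S n).typeI N))
        Filter.atTop}

/-- The error exponent of channel discrimination under coherent strategies. -/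
noncomputable def erExpCOH (r : ℝ) {A B : Type} [Fintype A] [DecidableEq A] [Fintype B]
    [DecidableEq B] (N M : MatC A →ₗ[ℂ] MatC B) : EReal :=
  sSup {e : EReal | ∃ S : (n : ℕ) → CohStrategy A B n,
    (Filter.limsup (fun n : ℕ => (((n : ℝ)⁻¹ : ℝ) : EReal) * elog2 ((S n).typeII M))
        Filter.atTop ≤ ((-r : ℝ) : EReal)) ∧
    e = -Filter.limsup (fun n : ℕ => (((n : ℝ)⁻¹ : ℝ) : EReal) * elog2 ((S n).typeI N))
        Filter.atTop}

/-!
Since `P` and `1 - P` are complementary projections of equal rank `d / 2`, the state `τ` has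
eigenvalues `t` and `3t`, each with multiplicity `d / 2`, so
`log₂ τ = log₂ t • P + log₂ (3t) • (1 - P)`. Under the maximally mixed state `σ` this observable
takes its two values with probability `1/2` each, so its variance is a quarter of the squared gap,
`(log₂ 3)² / 4`. The claimed bound `(log₂ (1 + d))² / d` is smaller as soon as
`(1 + d)² < 3 ^ √d`, which holds for `d ≥ 64`.
-/

theorem IsIdempotentElem.smul_add_smul_one_sub_mul {R A : Type*} [CommRing R] [Ring A]
    [Algebra R A] {p : A} (hp : IsIdempotentElem p) (a b a' b' : R) :
    (a • p + b • (1 - p)) * (a' • p + b' • (1 - p)) = (a * a') • p + (b * b') • (1 - p) := by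
  have hpq : p * (1 - p) = 0 := by rw [mul_sub, mul_one, hp.eq, sub_self]
  have hqp : (1 - p) * p = 0 := by rw [sub_mul, one_mul, hp.eq, sub_self]
  simp only [add_mul, mul_add, smul_mul_assoc, mul_smul_comm, hp.eq, hp.one_sub.eq, hpq, hqp,
    smul_zero, add_zero, zero_add, smul_smul, mul_comm a' a, mul_comm b' b]

namespace Matrix

theorem trace_smul_add_smul_one_sub {R n : Type*} [Field R] [CharZero R] [Fintype n]
    [DecidableEq n] {P : Matrix n n R} (htr : 2 * P.trace = Fintype.card n) (a b : R) :
    (a • P + b • (1 - P)).trace = (a + b) / 2 * Fintype.card n := by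
  rw [trace_add, trace_smul, trace_smul, trace_sub, trace_one, smul_eq_mul, smul_eq_mul]
  linear_combination (a - b) / 2 * htr

theorem trace_eq_rank_of_isIdempotentElem {K n : Type*} [Field K] [Fintype n] [DecidableEq n]
    {P : Matrix n n K} (hP : IsIdempotentElem P) : P.trace = P.rank := by
  have hP' : IsIdempotentElem (toLin' P) := hP.map toLinAlgEquiv'
  rw [← trace_toLin'_eq, (LinearMap.IsIdempotentElem.isProj_range _ hP').trace]
  rfl

variable {𝕜 n : Type*} [RCLike 𝕜] [Fintype n] [DecidableEq n]

theorem IsHermitian.eigenvalues_eq_or_eq {A : Matrix n n 𝕜} (hA : A.IsHermitian) {a b : ℝ}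
    (h : (A - algebraMap ℝ _ a) * (A - algebraMap ℝ _ b) = 0) (i : n) :
    hA.eigenvalues i = a ∨ hA.eigenvalues i = b := by
  have : Nonempty n := ⟨i⟩
  have hmem := spectrum.subset_polynomial_aeval A
    ((Polynomial.X - Polynomial.C a) * (Polynomial.X - Polynomial.C b))
    ⟨_, hA.eigenvalues_mem_spectrum_real i, rfl⟩
  simpa only [map_mul, map_sub, Polynomial.aeval_X, Polynomial.aeval_C, h,
    spectrum.zero_eq, Set.mem_singleton_iff, Polynomial.eval_mul, Polynomial.eval_sub,
    Polynomial.eval_X, Polynomial.eval_C, mul_eq_zero, sub_eq_zero] using hmem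

omit [DecidableEq n] in
theorem IsHermitian.posSemidef_of_isIdempotentElem {A : Matrix n n 𝕜} (hA : A.IsHermitian)
    (hA2 : IsIdempotentElem A) : A.PosSemidef := by
  simpa [hA.eq, hA2.eq] using posSemidef_conjTranspose_mul_self A

end Matrix

section TwoLevel

variable {ι : Type*} [Fintype ι] [DecidableEq ι]

theorem funCalc_eq_affine {X : MatC ι} (hX : X.IsHermitian) {f : ℝ → ℝ} (c₀ c₁ : ℝ)
    (hf : ∀ i, f (hX.eigenvalues i) = c₀ + c₁ * hX.eigenvalues i) :
    funCalc X f = (c₀ : ℂ) • 1 + (c₁ : ℂ) • X := by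
  set U : MatC ι := (hX.eigenvectorUnitary : MatC ι)
  have hUU : U * star U = 1 := Matrix.mem_unitaryGroup_iff.mp hX.eigenvectorUnitary.2
  have hdiag : Matrix.diagonal (fun i => (f (hX.eigenvalues i) : ℂ))
      = (c₀ : ℂ) • 1 + (c₁ : ℂ) • Matrix.diagonal (RCLike.ofReal ∘ hX.eigenvalues) := by
    ext i j
    rcases eq_or_ne i j with rfl | hij
    · simp [hf]
    · simp [Matrix.diagonal_apply_ne _ hij, Matrix.one_apply_ne hij]
  rw [funCalc, dif_pos hX, hdiag, Matrix.mul_add, Matrix.add_mul, Matrix.mul_smul,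
    Matrix.smul_mul, mul_one, hUU, Matrix.mul_smul, Matrix.smul_mul]
  conv_rhs => rw [hX.spectral_theorem, Unitary.conjStarAlgAut_apply]

omit [Fintype ι] in
theorem isHermitian_smul_add_smul_one_sub {P : MatC ι} (hP : P.IsHermitian) (a b : ℝ) :
    ((a : ℂ) • P + (b : ℂ) • (1 - P)).IsHermitian :=
  (hP.smul (by simp [IsSelfAdjoint])).add
    ((Matrix.isHermitian_one.sub hP).smul (by simp [IsSelfAdjoint]))

theorem funCalc_smul_add_smul_one_sub {P : MatC ι} (hP : P.IsHermitian)
    (hP2 : IsIdempotentElem P) (a b : ℝ) (f : ℝ → ℝ) :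
    funCalc ((a : ℂ) • P + (b : ℂ) • (1 - P)) f = (f a : ℂ) • P + (f b : ℂ) • (1 - P) := by
  set X := (a : ℂ) • P + (b : ℂ) • (1 - P)
  have hX := isHermitian_smul_add_smul_one_sub hP a b
  have hroots : (X - algebraMap ℝ _ a) * (X - algebraMap ℝ _ b) = 0 := by
    have hXa : X - algebraMap ℝ _ a = (0 : ℂ) • P + ((b - a : ℝ) : ℂ) • (1 - P) := by
      simp only [X, Algebra.algebraMap_eq_smul_one, ← Complex.coe_smul]; push_cast; module
    have hXb : X - algebraMap ℝ _ b = ((a - b : ℝ) : ℂ) • P + (0 : ℂ) • (1 - P) := by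
      simp only [X, Algebra.algebraMap_eq_smul_one, ← Complex.coe_smul]; push_cast; module
    rw [hXa, hXb, hP2.smul_add_smul_one_sub_mul]
    simp
  obtain ⟨c, hc⟩ : ∃ c, f a = f b + c * (a - b) := by
    rcases eq_or_ne a b with rfl | hab
    · exact ⟨0, by ring⟩
    · exact ⟨(f a - f b) / (a - b), by field_simp [sub_ne_zero.mpr hab]; ring⟩
  rw [funCalc_eq_affine hX (f b - c * b) c fun i => ?_]
  · rw [hc]; push_cast; module
  · rcases hX.eigenvalues_eq_or_eq hroots i with h | h <;> rw [h]
    · rw [hc]; ring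
    · ring

theorem posSemidef_smul_add_smul_one_sub {P : MatC ι} (hP : P.IsHermitian)
    (hP2 : IsIdempotentElem P) {a b : ℝ} (ha : 0 ≤ a) (hb : 0 ≤ b) :
    ((a : ℂ) • P + (b : ℂ) • (1 - P)).PosSemidef :=
  ((hP.posSemidef_of_isIdempotentElem hP2).smul (by exact_mod_cast ha)).add
    (((Matrix.isHermitian_one.sub hP).posSemidef_of_isIdempotentElem hP2.one_sub).smul
      (by exact_mod_cast hb))

def observableVariance (σ L : MatC ι) : ℝ :=
  ((σ * (L * L)).trace).re - ((σ * L).trace).re ^ 2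

theorem observableVariance_smul_add_smul_one_sub [Nonempty ι] {P : MatC ι}
    (hP : IsIdempotentElem P) (htr : 2 * P.trace = Fintype.card ι) (a b : ℝ) :
    observableVariance ((Fintype.card ι : ℂ)⁻¹ • 1) ((a : ℂ) • P + (b : ℂ) • (1 - P))
      = ((a - b) / 2) ^ 2 := by
  have hmean (a b : ℝ) :
      ((Fintype.card ι : ℂ)⁻¹ • 1 * ((a : ℂ) • P + (b : ℂ) • (1 - P))).trace
        = (((a + b) / 2 : ℝ) : ℂ) := by
    rw [Matrix.smul_mul, one_mul, Matrix.trace_smul, Matrix.trace_smul_add_smul_one_sub htr,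
      smul_eq_mul]
    field_simp
    push_cast
    ring
  have hsq : ((a : ℂ) • P + (b : ℂ) • (1 - P)) * ((a : ℂ) • P + (b : ℂ) • (1 - P))
      = ((a * a : ℝ) : ℂ) • P + ((b * b : ℝ) : ℂ) • (1 - P) := by
    rw [hP.smul_add_smul_one_sub_mul]; push_cast; rfl
  rw [observableVariance, hsq, hmean, hmean, Complex.ofReal_re, Complex.ofReal_re]
  ring

theorem maxEig_smul_one [Nonempty ι] (c : ℝ) : maxEig ((c : ℂ) • (1 : MatC ι)) = c := by
  have hc : (c : ℂ) • (1 : MatC ι) = algebraMap ℝ _ c := by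
    rw [Algebra.algebraMap_eq_smul_one, ← Complex.coe_smul]
  have hX : ((c : ℂ) • (1 : MatC ι)).IsHermitian :=
    Matrix.isHermitian_one.smul (by simp [IsSelfAdjoint])
  have heig (i : ι) : hX.eigenvalues i = c :=
    (hX.eigenvalues_eq_or_eq (by rw [hc, sub_self, zero_mul]) i).elim id id
  rw [maxEig, dif_pos hX, funext heig, ciSup_const]

end TwoLevel

section

open Real

theorem one_add_sq_sq_lt_three_rpow {x : ℝ} (hx : 8 ≤ x) : (1 + x ^ 2) ^ 2 < 3 ^ x := by
  set s := x - 8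
  have hs : 0 ≤ s := sub_nonneg.mpr hx
  have hlog3 : 1 < log 3 := by
    rw [lt_log_iff_exp_lt (by norm_num)]
    linarith [exp_one_lt_d9]
  have h3 : (3 : ℝ) ^ x = 6561 * 3 ^ s := by
    rw [show x = 8 + s by ring, rpow_add (by norm_num)]
    norm_num
  have hquartic : (1 + s / 2 + (s / 2) ^ 2 / 2) ^ 2 ≤ exp s := by
    rw [show exp s = exp (s / 2) ^ 2 by rw [← exp_nat_mul]; ring_nf]
    exact pow_le_pow_left₀ (by positivity) (quadratic_le_exp_of_nonneg (by positivity)) 2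
  have hexp : exp s ≤ 3 ^ s := by
    rw [rpow_def_of_pos (by norm_num)]
    exact exp_le_exp.mpr (by nlinarith)
  rw [h3, show x = s + 8 by ring]
  -- `6561 (1 + s/2 + s²/8)²` dominates `(65 + 16 s + s²)²` coefficientwise
  nlinarith [pow_nonneg hs 3, pow_nonneg hs 4]

theorem logb_one_add_sq_div_lt {d : ℝ} (hd : 64 ≤ d) :
    logb 2 (1 + d) ^ 2 / d < logb 2 3 ^ 2 / 4 := by
  set x := √d
  have hx : 8 ≤ x := by
    rw [show (8 : ℝ) = √64 by rw [show (64 : ℝ) = 8 ^ 2 by norm_num, sqrt_sq (by norm_num)]]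
    exact sqrt_le_sqrt hd
  have hdx : d = x ^ 2 := (sq_sqrt (by linarith)).symm
  have hlog : 2 * logb 2 (1 + d) < x * logb 2 3 := by
    have h := logb_lt_logb (b := 2) one_lt_two (by positivity)
      (hdx ▸ one_add_sq_sq_lt_three_rpow hx)
    rwa [logb_pow, logb_rpow_eq_mul_logb_of_pos (by norm_num), Nat.cast_ofNat] at h
  have hpos : 0 ≤ 2 * logb 2 (1 + d) := by
    have := logb_nonneg (b := 2) one_lt_two (show 1 ≤ 1 + d by linarith)
    linarith
  have hsq := pow_lt_pow_left₀ hlog hpos two_ne_zero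
  rw [mul_pow, mul_pow, ← hdx] at hsq
  rw [div_lt_div_iff₀ (by linarith) (by norm_num)]
  linarith

end

theorem stmt5 (d : ℕ) (hd : 64 ≤ d) (hdeven : Even d)
    (P : MatC (Fin d)) (hP : P.IsHermitian) (hP2 : P * P = P) (hrank : P.rank = d / 2)
    (σ τ : MatC (Fin d)) (t : ℝ)
    (ht : t = (2 * (d:ℝ))⁻¹)
    (hσdef : σ = ((d : ℂ))⁻¹ • 1)
    (hτdef : τ = (t : ℂ) • P + ((3 * t : ℝ) : ℂ) • (1 - P)) :
    IsDensity τ ∧ (τ - (t : ℂ) • 1).PosSemidef ∧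
    (((σ * (matLog2 τ * matLog2 τ)).trace).re - (((σ * matLog2 τ).trace).re) ^ 2
        = (Real.logb 2 3) ^ 2 / 4) ∧
    (maxEig σ * (Real.logb 2 (1 + t⁻¹ - d)) ^ 2 <
        ((σ * (matLog2 τ * matLog2 τ)).trace).re - (((σ * matLog2 τ).trace).re) ^ 2) ∧
    maxEig σ * (Real.logb 2 (1 + t⁻¹ - d)) ^ 2 = (Real.logb 2 (1 + (d:ℝ))) ^ 2 / d := by
  have : Nonempty (Fin d) := ⟨⟨0, by omega⟩⟩
  have ht0 : 0 < t := by rw [ht]; positivity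
  have htr : 2 * P.trace = Fintype.card (Fin d) := by
    rw [Matrix.trace_eq_rank_of_isIdempotentElem hP2, hrank, Fintype.card_fin]
    exact_mod_cast Nat.two_mul_div_two_of_even hdeven
  have hlog : matLog2 τ = (Real.logb 2 t : ℂ) • P + (Real.logb 2 (3 * t) : ℂ) • (1 - P) := by
    rw [hτdef, matLog2, funCalc_smul_add_smul_one_sub hP hP2, if_neg (by linarith),
      if_neg (by linarith)]
  have hvar : observableVariance σ (matLog2 τ) = Real.logb 2 3 ^ 2 / 4 := by
    have h := observableVariance_smul_add_smul_one_sub hP2 htr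
      (Real.logb 2 t) (Real.logb 2 (3 * t))
    rw [Fintype.card_fin] at h
    rw [hlog, hσdef, h, Real.logb_mul (by norm_num) ht0.ne']
    ring
  have hbound : maxEig σ * Real.logb 2 (1 + t⁻¹ - d) ^ 2 = Real.logb 2 (1 + d) ^ 2 / d := by
    rw [hσdef, show (d : ℂ)⁻¹ = ((d⁻¹ : ℝ) : ℂ) by push_cast; rfl, maxEig_smul_one, ht, inv_inv]
    ring_nf
  have hshift : τ - (t : ℂ) • 1 = (0 : ℂ) • P + ((2 * t : ℝ) : ℂ) • (1 - P) := by
    rw [hτdef]; push_cast; module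
  refine ⟨⟨?_, ?_⟩, ?_, hvar, ?_, hbound⟩
  · rw [hτdef]
    exact posSemidef_smul_add_smul_one_sub hP hP2 ht0.le (by linarith)
  · rw [hτdef, Matrix.trace_smul_add_smul_one_sub htr, Fintype.card_fin, ht]
    push_cast
    field_simp
    ring
  · rw [hshift]
    exact_mod_cast posSemidef_smul_add_smul_one_sub hP hP2 le_rfl (by linarith)
  · rw [hbound]
    exact (logb_one_add_sq_div_lt (by exact_mod_cast hd)).trans_eq hvar.symm

end
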